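/- arXiv:1411.4998 — 4 statements merged into one kernel-verified Lean document; each statement's English description precedes it below -/
import Mathlib

section
/- Let p be an odd prime, ζ a fixed primitive p-th root of unity in an algebraic closure Q̄ of ℚ, K = ℚ(ζ), and L ⊆ Q̄ the splitting field over K of f_p(x) = 1 − (1 − x^p)^p. Then L = L₂, where L₂ is the field obtained from K by adjoining, for each 1 ≤ i ≤ (p−1)/2, a p-th root of 1 − ζ^i, together with a p-th root of p. -/
/-!
The roots of `1 - (1 - x^p)^p` are the `p`-th roots of the numbers `1 - ζ^j`, `0 ≤ j < p`, and
two `p`-th roots of the same number differ by a power of `ζ`. Since `∏_{k=1}^{p-1} (1 - ζ^k) = p`,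
a product of roots of `f_p` is a `p`-th root of `p`, so `L₂ ⊆ L`. Conversely, with `p = 2m + 1`,
pairing `1 - ζ^(p-k) = -ζ^(p-k) (1 - ζ^k)` turns the same identity into
`p = ± ζ^s (∏_{k=1}^m (1 - ζ^k))^2` with `p ∤ s`. Hence `± β / (∏ α_k)^2` is a `p`-th root of
`ζ^s` and a power of it is a `p`-th root `η` of `ζ`; then `-η^j α_(p-j)` is a `p`-th root of
`1 - ζ^j` for `m < j < p`, so `L ⊆ L₂`.
-/

open Finset

theorem prod_range_one_sub_pow_eq_neg_one_pow_mul_sq {R : Type*} [CommRing R] {m : ℕ} {ζ : R}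
    (hζ : ζ ^ (2 * m + 1) = 1) :
    ∏ k ∈ range (2 * m), (1 - ζ ^ (k + 1)) =
      (-1) ^ m * ζ ^ (∑ k ∈ range m, (2 * m + 1 - (k + 1))) *
        (∏ k ∈ range m, (1 - ζ ^ (k + 1))) ^ 2 := by
  have hreflect : ∏ k ∈ range m, (1 - ζ ^ (m + k + 1)) =
      ∏ k ∈ range m, (1 - ζ ^ (2 * m + 1 - (k + 1))) := by
    rw [← prod_range_reflect]
    refine prod_congr rfl fun k hk => ?_
    rw [mem_range] at hk
    congr 2
    omega
  have hflip : ∀ k ∈ range m, 1 - ζ ^ (2 * m + 1 - (k + 1)) =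
      -1 * ζ ^ (2 * m + 1 - (k + 1)) * (1 - ζ ^ (k + 1)) := by
    intro k hk
    rw [mem_range] at hk
    have hinv : ζ ^ (2 * m + 1 - (k + 1)) * ζ ^ (k + 1) = 1 := by
      rw [← pow_add, Nat.sub_add_cancel (by omega), hζ]
    linear_combination -hinv
  conv_lhs => rw [two_mul]
  rw [prod_range_add, hreflect, prod_congr rfl hflip, prod_mul_distrib, prod_mul_distrib,
    prod_const, card_range, prod_pow_eq_pow_sum]
  ring

theorem Nat.Prime.not_dvd_sum_range_sub {m : ℕ} (hp : (2 * m + 1).Prime) :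
    ¬ 2 * m + 1 ∣ ∑ k ∈ range m, (2 * m + 1 - (k + 1)) := by
  set T := ∑ k ∈ range m, (k + 1)
  have hT : T * 2 = (m + 1) * m := by
    have := sum_range_id_mul_two (m + 1)
    rw [sum_range_succ'] at this
    simpa using this
  have hsum : ∑ k ∈ range m, (2 * m + 1 - (k + 1)) + T = m * (2 * m + 1) := by
    rw [← sum_add_distrib,
      sum_congr rfl fun k hk => Nat.sub_add_cancel (by have := mem_range.mp hk; omega), sum_const,
      card_range, smul_eq_mul]
  intro hdvd
  have hdvdT : 2 * m + 1 ∣ (m + 1) * m :=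
    hT ▸ dvd_mul_of_dvd_left ((Nat.dvd_add_right hdvd).mp (hsum ▸ dvd_mul_left _ _)) 2
  have hm : 1 ≤ m := by have := hp.two_le; omega
  rcases hp.dvd_mul.mp hdvdT with h | h <;> have := Nat.le_of_dvd (by omega) h <;> omega

namespace IsPrimitiveRoot

section Domain

variable {R : Type*} [CommRing R] [IsDomain R] {p : ℕ} {ζ : R}

theorem one_sub_one_sub_pow_pow_eq_zero_iff [NeZero p] (hζ : IsPrimitiveRoot ζ p) {x : R} :
    1 - (1 - x ^ p) ^ p = 0 ↔ ∃ j < p, x ^ p = 1 - ζ ^ j := by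
  rw [sub_eq_zero, eq_comm]
  constructor
  · intro h
    obtain ⟨j, hj, hζj⟩ := hζ.eq_pow_of_pow_eq_one h
    exact ⟨j, hj, by rw [hζj, sub_sub_cancel]⟩
  · rintro ⟨j, -, hj⟩
    rw [hj, sub_sub_cancel, ← pow_mul, mul_comm, pow_mul, hζ.pow_eq_one, one_pow]

theorem exists_pow_pow_eq_self_of_pow_eq_pow (hζ : IsPrimitiveRoot ζ p) (hp : p.Prime)
    {g : R} {s : ℕ} (hg : g ^ p = ζ ^ s) (hs : ¬ p ∣ s) : ∃ b, (g ^ b) ^ p = ζ := by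
  have : NeZero p := ⟨hp.ne_zero⟩
  have hζs : IsPrimitiveRoot (ζ ^ s) p :=
    hζ.pow_of_coprime s (Nat.coprime_comm.mp (hp.coprime_iff_not_dvd.mpr hs))
  obtain ⟨b, -, hb⟩ := hζs.eq_pow_of_pow_eq_one hζ.pow_eq_one
  exact ⟨b, by rw [← pow_mul, mul_comm, pow_mul, hg, hb]⟩

end Domain

variable {F : Type*} [Field F] {p : ℕ} {ζ : F}

theorem exists_pow_mul_eq_of_pow_eq_pow [NeZero p] (hζ : IsPrimitiveRoot ζ p) {x y : F}
    (h : x ^ p = y ^ p) : ∃ k, ζ ^ k * y = x := by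
  rcases eq_or_ne y 0 with rfl | hy
  · rw [zero_pow (NeZero.ne p), pow_eq_zero_iff (NeZero.ne p)] at h
    exact ⟨0, by simp [h]⟩
  · obtain ⟨k, -, hk⟩ := hζ.eq_pow_of_pow_eq_one (ξ := x / y)
      (by rw [div_pow, h, div_self (pow_ne_zero _ hy)])
    exact ⟨k, by rw [hk, div_mul_cancel₀ _ hy]⟩

variable {S : Type*} [SetLike S F] {N : S}

theorem mem_of_pow_eq_pow [SubmonoidClass S F] [NeZero p] (hζ : IsPrimitiveRoot ζ p)
    (hζN : ζ ∈ N) {x y : F} (hy : y ∈ N) (h : x ^ p = y ^ p) : x ∈ N := by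
  obtain ⟨k, rfl⟩ := hζ.exists_pow_mul_eq_of_pow_eq_pow h
  exact mul_mem (pow_mem hζN k) hy

theorem mem_of_pow_eq_natCast [IsAlgClosed F] [SubmonoidClass S F] [NeZero p]
    (hζ : IsPrimitiveRoot ζ p) (hζN : ζ ∈ N) (hN : ∀ x : F, 1 - (1 - x ^ p) ^ p = 0 → x ∈ N)
    {β : F} (hβ : β ^ p = (p : F)) : β ∈ N := by
  choose r hr using fun k : ℕ => IsAlgClosed.exists_pow_nat_eq (1 - ζ ^ (k + 1)) (NeZero.pos p)
  obtain ⟨n, rfl⟩ : ∃ n, p = n + 1 := ⟨p - 1, by have := NeZero.pos p; omega⟩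
  have hprod : (∏ k ∈ range n, r k) ^ (n + 1) = ((n + 1 : ℕ) : F) := by
    rw [← prod_pow, prod_congr rfl fun k _ => hr k, hζ.prod_one_sub_pow_eq_order, Nat.cast_succ]
  refine hζ.mem_of_pow_eq_pow hζN (prod_mem fun k hk => hN _ ?_) (hβ.trans hprod.symm)
  exact hζ.one_sub_one_sub_pow_pow_eq_zero_iff.mpr ⟨k + 1, by simpa using hk, hr k⟩

end IsPrimitiveRoot

section OddPrime

variable {F : Type*} [Field F] {S : Type*} [SetLike S F] {N : S} {m : ℕ} {ζ : F}
  {α : ℕ → F}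

theorem IsPrimitiveRoot.exists_mem_pow_eq_self [SubfieldClass S F]
    (hζ : IsPrimitiveRoot ζ (2 * m + 1)) (hp : (2 * m + 1).Prime)
    (hα : ∀ i, 1 ≤ i → i ≤ m → α i ^ (2 * m + 1) = 1 - ζ ^ i)
    (hαN : ∀ i, 1 ≤ i → i ≤ m → α i ∈ N) {β : F} (hβ : β ^ (2 * m + 1) = ((2 * m + 1 : ℕ) : F))
    (hβN : β ∈ N) : ∃ η ∈ N, η ^ (2 * m + 1) = ζ := by
  set P := ∏ k ∈ range m, (1 - ζ ^ (k + 1))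
  set A := ∏ k ∈ range m, α (k + 1)
  have hAP : A ^ (2 * m + 1) = P := by
    rw [← prod_pow]
    exact prod_congr rfl fun k hk => hα _ (by omega) (by have := mem_range.mp hk; omega)
  have hP : P ≠ 0 := prod_ne_zero_iff.mpr fun k hk => sub_ne_zero.mpr
    (hζ.pow_ne_one_of_pos_of_lt (by omega) (by have := mem_range.mp hk; omega)).symm
  have hpP : ((2 * m + 1 : ℕ) : F) =
      (-1) ^ m * ζ ^ (∑ k ∈ range m, (2 * m + 1 - (k + 1))) * P ^ 2 := by
    rw [← prod_range_one_sub_pow_eq_neg_one_pow_mul_sq hζ.pow_eq_one,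
      hζ.prod_one_sub_pow_eq_order, Nat.cast_succ]
  set g := (-1) ^ m * β / A ^ 2
  have hg : g ^ (2 * m + 1) = ζ ^ (∑ k ∈ range m, (2 * m + 1 - (k + 1))) := by
    have hsign : ((-1 : F) ^ m) ^ (2 * m + 1) = (-1) ^ m := by
      rw [← pow_mul, mul_comm, pow_mul, Odd.neg_one_pow ⟨m, rfl⟩]
    have hA2 : (A ^ 2) ^ (2 * m + 1) = P ^ 2 := by rw [← pow_mul, mul_comm, pow_mul, hAP]
    have hsq : ((-1 : F) ^ m) * (-1) ^ m = 1 := by rw [← mul_pow, neg_one_mul, neg_neg, one_pow]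
    rw [div_pow, mul_pow, hsign, hβ, hpP, hA2, div_eq_iff (pow_ne_zero 2 hP)]
    linear_combination (ζ ^ (∑ k ∈ range m, (2 * m + 1 - (k + 1))) * P ^ 2) * hsq
  obtain ⟨b, hb⟩ := hζ.exists_pow_pow_eq_self_of_pow_eq_pow hp hg hp.not_dvd_sum_range_sub
  have hAN : A ∈ N := prod_mem fun k hk => hαN _ (by omega) (by have := mem_range.mp hk; omega)
  exact ⟨g ^ b, pow_mem (div_mem (mul_mem (pow_mem (neg_mem (one_mem N)) m) hβN)
    (pow_mem hAN 2)) b, hb⟩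

theorem exists_mem_pow_eq_one_sub_pow [SubringClass S F] (hζ : ζ ^ (2 * m + 1) = 1)
    (hα : ∀ i, 1 ≤ i → i ≤ m → α i ^ (2 * m + 1) = 1 - ζ ^ i)
    (hαN : ∀ i, 1 ≤ i → i ≤ m → α i ∈ N) {η : F} (hη : η ^ (2 * m + 1) = ζ) (hηN : η ∈ N)
    {j : ℕ} (hj : j < 2 * m + 1) : ∃ y ∈ N, y ^ (2 * m + 1) = 1 - ζ ^ j := by
  rcases Nat.eq_zero_or_pos j with rfl | hj0
  · exact ⟨0, zero_mem N, by simp⟩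
  rcases le_or_gt j m with hjm | hjm
  · exact ⟨α j, hαN j hj0 hjm, hα j hj0 hjm⟩
  refine ⟨-η ^ j * α (2 * m + 1 - j),
    mul_mem (neg_mem (pow_mem hηN j)) (hαN _ (by omega) (by omega)), ?_⟩
  have hinv : ζ ^ j * ζ ^ (2 * m + 1 - j) = 1 := by
    rw [← pow_add, Nat.add_sub_cancel' hj.le, hζ]
  rw [mul_pow, neg_pow, Odd.neg_one_pow ⟨m, rfl⟩, ← pow_mul, mul_comm j, pow_mul, hη,
    hα _ (by omega) (by omega)]
  linear_combination hinv

end OddPrime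

/-- Let `p` be an odd prime, `ζ` a primitive `p`-th root of unity in `Q̄ = AlgebraicClosure ℚ`,
`K = ℚ(ζ)`, and `L ⊆ Q̄` the splitting field over `K` of `f_p(x) = 1 - (1 - x^p)^p`.
Then `L = L₂`, where `L₂` is obtained from `K` by adjoining, for each `1 ≤ i ≤ (p-1)/2`,
a `p`-th root `α i` of `1 - ζ^i`, together with a `p`-th root `β` of `p`. -/
theorem stmt_2 (p : ℕ) (hp : p.Prime) (hodd : Odd p)
    (ζ : AlgebraicClosure ℚ) (hζ : IsPrimitiveRoot ζ p)
    (K : IntermediateField ℚ (AlgebraicClosure ℚ))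
    (hK : K = IntermediateField.adjoin ℚ {ζ})
    (L : IntermediateField K (AlgebraicClosure ℚ))
    (hL : L = IntermediateField.adjoin K
      {x : AlgebraicClosure ℚ | 1 - (1 - x ^ p) ^ p = 0})
    (α : ℕ → AlgebraicClosure ℚ)
    (hα : ∀ i : ℕ, 1 ≤ i → i ≤ (p - 1) / 2 → (α i) ^ p = 1 - ζ ^ i)
    (β : AlgebraicClosure ℚ) (hβ : β ^ p = (p : AlgebraicClosure ℚ)) :
    L = IntermediateField.adjoin K
      ((α '' {i : ℕ | 1 ≤ i ∧ i ≤ (p - 1) / 2}) ∪ {β}) := by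
  obtain ⟨m, rfl⟩ := hodd
  have : NeZero (2 * m + 1) := ⟨by omega⟩
  have hm : (2 * m + 1 - 1) / 2 = m := by omega
  simp only [hm] at hα ⊢
  have hζN (N : IntermediateField K (AlgebraicClosure ℚ)) : ζ ∈ N := by
    simpa using N.algebraMap_mem ⟨ζ, hK ▸ IntermediateField.mem_adjoin_simple_self ℚ ζ⟩
  subst hL
  apply le_antisymm
  · set M := IntermediateField.adjoin K ((α '' {i : ℕ | 1 ≤ i ∧ i ≤ m}) ∪ {β})
    have hαM (i : ℕ) (h1 : 1 ≤ i) (h2 : i ≤ m) : α i ∈ M :=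
      IntermediateField.subset_adjoin K _ (Or.inl ⟨i, ⟨h1, h2⟩, rfl⟩)
    have hβM : β ∈ M := IntermediateField.subset_adjoin K _ (Or.inr rfl)
    obtain ⟨η, hηM, hη⟩ := hζ.exists_mem_pow_eq_self hp hα hαM hβ hβM
    rw [IntermediateField.adjoin_le_iff]
    intro x hx
    obtain ⟨j, hj, hxj⟩ := hζ.one_sub_one_sub_pow_pow_eq_zero_iff.mp hx
    obtain ⟨y, hyM, hy⟩ := exists_mem_pow_eq_one_sub_pow hζ.pow_eq_one hα hαM hη hηM hj
    exact hζ.mem_of_pow_eq_pow (hζN M) hyM (hxj.trans hy.symm)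
  · have hroot (x : AlgebraicClosure ℚ) (hx : 1 - (1 - x ^ (2 * m + 1)) ^ (2 * m + 1) = 0) :
        x ∈ IntermediateField.adjoin K
          {x : AlgebraicClosure ℚ | 1 - (1 - x ^ (2 * m + 1)) ^ (2 * m + 1) = 0} :=
      IntermediateField.subset_adjoin K _ hx
    rw [IntermediateField.adjoin_le_iff]
    rintro _ (⟨i, ⟨hi1, hi2⟩, rfl⟩ | rfl)
    · exact hroot _ (hζ.one_sub_one_sub_pow_pow_eq_zero_iff.mpr ⟨i, by omega, hα i hi1 hi2⟩)
    · exact hζ.mem_of_pow_eq_natCast (hζN _) hroot hβ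
end

section
/- Let p be an odd prime, ζ a fixed primitive p-th root of unity in an algebraic closure Q̄ of ℚ, K = ℚ(ζ), and L ⊆ Q̄ the splitting field over K of f_p(x) = 1 − (1 − x^p)^p. Then L = L₃, where L₃ is the field obtained from K by adjoining, for each 1 ≤ i ≤ (p−1)/2, a p-th root of 1 − ζ^i, together with a p-th root of ζ. -/
/-!
The roots of `f_p` are the `x` with `x ^ p = 1 - ζ ^ j`, `0 ≤ j < p`. Since `K` contains all
`p`-th roots of unity, a field over `K` containing one `p`-th root of `c` contains all of them,
so both fields are generated by one `p`-th root of each `1 - ζ ^ j`. For odd `p` the identity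
`1 - ζ ^ (p - i) = -ζ ^ (p - i) (1 - ζ ^ i)` gives `(-α i / γ ^ i) ^ p = 1 - ζ ^ (p - i)`, and
`ζ = -(1 - ζ) / (1 - ζ ^ (p - 1))` recovers `γ` from roots of `f_p`.
-/

section PowRoots

variable {E : Type*} [Field E] {n : ℕ} {ζ : E}

theorem IsPrimitiveRoot.mem_of_pow_eq_pow_s3 {S : Type*} [SetLike S E] [SubfieldClass S E]
    {M : S} [NeZero n] (hζ : IsPrimitiveRoot ζ n) (hζM : ζ ∈ M) {x y : E} (hy : y ∈ M)
    (hxy : x ^ n = y ^ n) : x ∈ M := by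
  rcases eq_or_ne y 0 with rfl | hy0
  · rw [zero_pow (NeZero.ne n), pow_eq_zero_iff (NeZero.ne n)] at hxy
    exact hxy ▸ zero_mem M
  obtain ⟨k, -, hk⟩ := hζ.eq_pow_of_pow_eq_one (ξ := x / y) <| by
    rw [div_pow, hxy, div_self (pow_ne_zero _ hy0)]
  have hx : x = ζ ^ k * y := by rw [hk, div_mul_cancel₀ x hy0]
  exact hx ▸ mul_mem (pow_mem hζM k) hy

theorem IsPrimitiveRoot.one_sub_one_sub_pow_pow_eq_zero_iff_s3 [NeZero n]
    (hζ : IsPrimitiveRoot ζ n) {x : E} :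
    1 - (1 - x ^ n) ^ n = 0 ↔ ∃ j < n, x ^ n = 1 - ζ ^ j := by
  constructor
  · intro hx
    obtain ⟨j, hj, hζj⟩ := hζ.eq_pow_of_pow_eq_one (ξ := 1 - x ^ n) (by linear_combination -hx)
    exact ⟨j, hj, by linear_combination hζj⟩
  · rintro ⟨j, -, hx⟩
    rw [hx, sub_sub_cancel, ← pow_mul, mul_comm, pow_mul, hζ.pow_eq_one, one_pow, sub_self]

theorem neg_div_pow_pow_eq_one_sub_pow (hn : Odd n) {γ a : E} {i j : ℕ} (hγ : γ ^ n = ζ)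
    (hζ : ζ ^ (i + j) = 1) (ha : a ^ n = 1 - ζ ^ i) : (-a / γ ^ i) ^ n = 1 - ζ ^ j := by
  rw [pow_add] at hζ
  rw [div_pow, ← pow_mul, mul_comm i n, pow_mul, hγ, hn.neg_pow, ha,
    div_eq_iff (left_ne_zero_of_mul_eq_one hζ)]
  linear_combination hζ

theorem neg_div_pow_eq_of_pow_eq_one_sub (hn : Odd n) {σ ρ : E} {j : ℕ} (hζj : ζ ^ j ≠ 1)
    (hζ : ζ ^ (1 + j) = 1) (hσ : σ ^ n = 1 - ζ) (hρ : ρ ^ n = 1 - ζ ^ j) :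
    (-σ / ρ) ^ n = ζ := by
  have hζ' : ζ * ζ ^ j = 1 := by rw [← pow_succ', add_comm, hζ]
  rw [div_pow, hn.neg_pow, hσ, hρ, div_eq_iff (sub_ne_zero.mpr hζj.symm)]
  linear_combination hζ'

theorem exists_mem_pow_eq_one_sub_pow_s3 {S : Type*} [SetLike S E] [SubfieldClass S E] {M : S}
    (hn : Odd n) (hζ : ζ ^ n = 1) {γ : E} (hγM : γ ∈ M) (hγ : γ ^ n = ζ)
    (hroots : ∀ i, 1 ≤ i → i ≤ (n - 1) / 2 → ∃ a ∈ M, a ^ n = 1 - ζ ^ i) :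
    ∀ j < n, ∃ y ∈ M, y ^ n = 1 - ζ ^ j := by
  intro j hj
  obtain ⟨m, hm⟩ := id hn
  rcases Nat.eq_zero_or_pos j with rfl | hj0
  · exact ⟨0, zero_mem M, by rw [zero_pow hn.pos.ne', pow_zero, sub_self]⟩
  by_cases hjle : j ≤ (n - 1) / 2
  · exact hroots j hj0 hjle
  obtain ⟨a, haM, ha⟩ := hroots (n - j) (by omega) (by omega)
  refine ⟨-a / γ ^ (n - j), div_mem (neg_mem haM) (pow_mem hγM _), ?_⟩
  exact neg_div_pow_pow_eq_one_sub_pow hn hγ (by rwa [Nat.sub_add_cancel hj.le]) ha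

end PowRoots

/-- Let `p` be an odd prime, `ζ` a primitive `p`-th root of unity in `Q̄ = AlgebraicClosure ℚ`,
`K = ℚ(ζ)`, and `L ⊆ Q̄` the splitting field over `K` of `f_p(x) = 1 - (1 - x^p)^p`.
Then `L = L₃`, where `L₃` is obtained from `K` by adjoining, for each `1 ≤ i ≤ (p-1)/2`,
a `p`-th root `α i` of `1 - ζ^i`, together with a `p`-th root `γ` of `ζ`. -/
theorem stmt_3 (p : ℕ) (hp : p.Prime) (hodd : Odd p)
    (ζ : AlgebraicClosure ℚ) (hζ : IsPrimitiveRoot ζ p)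
    (K : IntermediateField ℚ (AlgebraicClosure ℚ))
    (hK : K = IntermediateField.adjoin ℚ {ζ})
    (L : IntermediateField K (AlgebraicClosure ℚ))
    (hL : L = IntermediateField.adjoin K
      {x : AlgebraicClosure ℚ | 1 - (1 - x ^ p) ^ p = 0})
    (α : ℕ → AlgebraicClosure ℚ)
    (hα : ∀ i : ℕ, 1 ≤ i → i ≤ (p - 1) / 2 → (α i) ^ p = 1 - ζ ^ i)
    (γ : AlgebraicClosure ℚ) (hγ : γ ^ p = ζ) :
    L = IntermediateField.adjoin K
      ((α '' {i : ℕ | 1 ≤ i ∧ i ≤ (p - 1) / 2}) ∪ {γ}) := by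
  have : NeZero p := ⟨hodd.pos.ne'⟩
  have hζK : ζ ∈ K := hK ▸ IntermediateField.mem_adjoin_simple_self ℚ ζ
  have hζmem (M : IntermediateField K (AlgebraicClosure ℚ)) : ζ ∈ M :=
    M.algebraMap_mem ⟨ζ, hζK⟩
  subst hL
  have hroot {y : AlgebraicClosure ℚ} {j : ℕ} (hj : j < p) (hy : y ^ p = 1 - ζ ^ j) :
      y ∈ IntermediateField.adjoin K {x : AlgebraicClosure ℚ | 1 - (1 - x ^ p) ^ p = 0} :=
    IntermediateField.subset_adjoin K _ (hζ.one_sub_one_sub_pow_pow_eq_zero_iff_s3.2 ⟨j, hj, hy⟩)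
  set L₃ := IntermediateField.adjoin K ((α '' {i : ℕ | 1 ≤ i ∧ i ≤ (p - 1) / 2}) ∪ {γ})
  apply le_antisymm
  · have hγL₃ : γ ∈ L₃ := IntermediateField.subset_adjoin K _ (Or.inr rfl)
    have hαL₃ (i : ℕ) (hi1 : 1 ≤ i) (hi2 : i ≤ (p - 1) / 2) : α i ∈ L₃ :=
      IntermediateField.subset_adjoin K _ (Or.inl ⟨i, ⟨hi1, hi2⟩, rfl⟩)
    rw [IntermediateField.adjoin_le_iff]
    intro x hx
    obtain ⟨j, hj, hxj⟩ := hζ.one_sub_one_sub_pow_pow_eq_zero_iff_s3.1 hx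
    obtain ⟨y, hyM, hyj⟩ := exists_mem_pow_eq_one_sub_pow_s3 hodd hζ.pow_eq_one hγL₃ hγ
      (fun i hi1 hi2 => ⟨α i, hαL₃ i hi1 hi2, hα i hi1 hi2⟩) j hj
    exact hζ.mem_of_pow_eq_pow_s3 (hζmem _) hyM (hxj.trans hyj.symm)
  · rw [IntermediateField.adjoin_le_iff]
    rintro _ (⟨i, ⟨hi1, hi2⟩, rfl⟩ | rfl)
    · exact hroot (by omega) (hα i hi1 hi2)
    have hp2 := hp.two_le
    have hp1 : p - 1 < p := by omega
    obtain ⟨σ, hσ⟩ := IsAlgClosed.exists_pow_nat_eq (1 - ζ) hodd.pos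
    obtain ⟨ρ, hρ⟩ := IsAlgClosed.exists_pow_nat_eq (1 - ζ ^ (p - 1)) hodd.pos
    have hγσρ : (-σ / ρ) ^ p = ζ :=
      neg_div_pow_eq_of_pow_eq_one_sub hodd (hζ.pow_ne_one_of_pos_of_lt (by omega) hp1)
        (by rw [Nat.add_sub_cancel' hp.one_le, hζ.pow_eq_one]) hσ hρ
    exact hζ.mem_of_pow_eq_pow_s3 (hζmem _)
      (div_mem (neg_mem (hroot hp.one_lt (by rwa [pow_one]))) (hroot hp1 hρ))
      (hγ.trans hγσρ.symm)
end

section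
/- Let p be an odd prime and ζ a primitive p-th root of unity. Set b = ∏_{i=1}^{(p−1)/2} (1 − ζ^i). Then b² = (−1)^{(p−1)/2} · ζ^{(p−1)(p+1)/8} · p, where the exponent (p−1)(p+1)/8 = (p²−1)/8 is an integer. -/
/-!
Write `p = 2m + 1` and `b = ∏_{k=1}^{m} (1 - ζ^k)`. Since `ζ^p = 1`, the factor `1 - ζ^(p-k)` of the
upper half of `∏_{k=1}^{p-1} (1 - ζ^k) = p` equals `-ζ^(p-k) (1 - ζ^k)`, so `p = (-1)^m ζ^S b²` with
`S = ∑_{k=1}^{m} (p - k)`. As `S + T = m p` for `T = ∑_{k=1}^{m} k = (p² - 1)/8`, multiplying by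
`(-1)^m ζ^T` gives `b² = (-1)^m ζ^T p`.
-/

open Finset

section

variable {R : Type*} [CommRing R]

lemma one_sub_pow_sub_of_pow_eq_one {ζ : R} {n j : ℕ} (h : ζ ^ n = 1) (hj : j ≤ n) :
    1 - ζ ^ (n - j) = -ζ ^ (n - j) * (1 - ζ ^ j) := by
  have hinv : ζ ^ (n - j) * ζ ^ j = 1 := by rw [← pow_add, Nat.sub_add_cancel hj, h]
  linear_combination -hinv

lemma prod_range_one_sub_pow_sub_of_pow_eq_one {ζ : R} {n m : ℕ} (h : ζ ^ n = 1) (hm : m ≤ n) :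
    ∏ k ∈ range m, (1 - ζ ^ (n - (k + 1))) =
      (-1) ^ m * ζ ^ (∑ k ∈ range m, (n - (k + 1))) * ∏ k ∈ range m, (1 - ζ ^ (k + 1)) := by
  calc ∏ k ∈ range m, (1 - ζ ^ (n - (k + 1)))
      = ∏ k ∈ range m, ((-1) * ζ ^ (n - (k + 1)) * (1 - ζ ^ (k + 1))) := by
        refine prod_congr rfl fun k hk => ?_
        rw [one_sub_pow_sub_of_pow_eq_one h (by rw [mem_range] at hk; omega), neg_one_mul]
    _ = _ := by rw [prod_mul_distrib, prod_mul_distrib, prod_const, card_range, prod_pow_eq_pow_sum]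

lemma sum_range_add_one_mul_two (m : ℕ) : (∑ k ∈ range m, (k + 1)) * 2 = m * (m + 1) := by
  have := sum_range_id_mul_two (m + 1)
  rwa [sum_range_succ', add_zero, Nat.add_sub_cancel, mul_comm (m + 1)] at this

theorem IsPrimitiveRoot.sq_prod_range_one_sub_pow_of_odd [IsDomain R] {ζ : R} {m : ℕ}
    (hζ : IsPrimitiveRoot ζ (2 * m + 1)) :
    (∏ k ∈ range m, (1 - ζ ^ (k + 1))) ^ 2 =
      (-1) ^ m * ζ ^ (∑ k ∈ range m, (k + 1)) * (2 * m + 1) := by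
  set b := ∏ k ∈ range m, (1 - ζ ^ (k + 1)) with hb
  set S := ∑ k ∈ range m, (2 * m + 1 - (k + 1))
  set T := ∑ k ∈ range m, (k + 1)
  have hupper : ∏ k ∈ range m, (1 - ζ ^ (m + k + 1)) = (-1) ^ m * ζ ^ S * b := by
    rw [← prod_range_one_sub_pow_sub_of_pow_eq_one hζ.pow_eq_one (by omega),
      ← prod_range_reflect]
    refine prod_congr rfl fun k hk => ?_
    rw [mem_range] at hk
    congr 2
    omega
  have hfull : b * ((-1) ^ m * ζ ^ S * b) = 2 * m + 1 := by
    have := hζ.prod_one_sub_pow_eq_order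
    rw [two_mul, prod_range_add, hupper, ← hb] at this
    push_cast at this
    linear_combination this
  have hST : ζ ^ S * ζ ^ T = 1 := by
    rw [← pow_add, ← sum_add_distrib,
      sum_congr rfl fun k hk => Nat.sub_add_cancel (by rw [mem_range] at hk; omega),
      sum_const, card_range, smul_eq_mul, pow_mul', hζ.pow_eq_one, one_pow]
  calc b ^ 2 = b ^ 2 * (ζ ^ S * ζ ^ T) * ((-1) ^ m * (-1) ^ m) := by
        rw [hST, ← pow_add, Even.neg_one_pow ⟨m, rfl⟩]; ring
    _ = (-1) ^ m * ζ ^ T * (b * ((-1) ^ m * ζ ^ S * b)) := by ring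
    _ = (-1) ^ m * ζ ^ T * (2 * m + 1) := by rw [hfull]

end

theorem stmt_4_general (p : ℕ) (hodd : Odd p)
    (ζ : AlgebraicClosure ℚ) (hζ : IsPrimitiveRoot ζ p) :
    8 ∣ p ^ 2 - 1 ∧
    (∏ i ∈ Finset.Icc 1 ((p - 1) / 2), (1 - ζ ^ i)) ^ 2 =
      (-1) ^ ((p - 1) / 2) * ζ ^ ((p ^ 2 - 1) / 8) * (p : AlgebraicClosure ℚ) := by
  refine ⟨Nat.eight_dvd_sq_sub_one_of_odd hodd, ?_⟩
  obtain ⟨m, rfl⟩ := hodd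
  have hexp : ((2 * m + 1) ^ 2 - 1) / 8 = ∑ k ∈ range m, (k + 1) := by
    have hsq : (2 * m + 1) ^ 2 - 1 = (∑ k ∈ range m, (k + 1)) * 8 := by
      apply Nat.sub_eq_of_eq_add
      linear_combination 4 * (sum_range_add_one_mul_two m).symm
    omega
  have hIcc : ∏ i ∈ Icc 1 m, (1 - ζ ^ i) = ∏ k ∈ range m, (1 - ζ ^ (k + 1)) := by
    rw [← Ico_add_one_right_eq_Icc, prod_Ico_eq_prod_range, Nat.add_sub_cancel]
    simp only [add_comm 1]
  rw [show (2 * m + 1 - 1) / 2 = m by omega, hexp, hIcc, hζ.sq_prod_range_one_sub_pow_of_odd]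
  push_cast
  ring

/-- Let `p` be an odd prime and `ζ` a primitive `p`-th root of unity (in `AlgebraicClosure ℚ`).
Set `b = ∏_{i=1}^{(p-1)/2} (1 - ζ^i)`.  Then the exponent `(p-1)(p+1)/8 = (p²-1)/8` is an
integer, and `b² = (-1)^((p-1)/2) · ζ^((p²-1)/8) · p`. -/
theorem stmt_4 (p : ℕ) (hp : p.Prime) (hodd : Odd p)
    (ζ : AlgebraicClosure ℚ) (hζ : IsPrimitiveRoot ζ p) :
    8 ∣ p ^ 2 - 1 ∧
    (∏ i ∈ Finset.Icc 1 ((p - 1) / 2), (1 - ζ ^ i)) ^ 2 =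
      (-1) ^ ((p - 1) / 2) * ζ ^ ((p ^ 2 - 1) / 8) * (p : AlgebraicClosure ℚ) :=
  stmt_4_general p hodd ζ hζ
end

section
/- Let Λ₁ = 𝔽₃[e, f]/(e³ − 1, f³ − 1) and B_σ = 1 − (e + f)(1 − e)(1 − f) ∈ Λ₁. Then the annihilator of 1 − B_σ in Λ₁, i.e., {m ∈ Λ₁ : B_σ·m = m}, equals the ideal of Λ₁ generated by 1 + e + e² and 1 + f + f². -/
/-- `Λ₁ = 𝔽₃[e,f]/(e³-1, f³-1)`: the group ring of `(ℤ/3)²` over `𝔽₃ = ZMod 3`. -/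
noncomputable abbrev Lam3 : Type := AddMonoidAlgebra (ZMod 3) (ZMod 3 × ZMod 3)

/-- The group-like generator `e`. -/
noncomputable def eGen : Lam3 := AddMonoidAlgebra.single ((1 : ZMod 3), (0 : ZMod 3)) 1

/-- The group-like generator `f`. -/
noncomputable def fGen : Lam3 := AddMonoidAlgebra.single ((0 : ZMod 3), (1 : ZMod 3)) 1

/-- `B_σ = 1 - (e + f)(1 - e)(1 - f)`. -/
noncomputable def Bsig : Lam3 := 1 - (eGen + fGen) * (1 - eGen) * (1 - fGen)

/-- `B_τ = 1 + (e + f) - (e² + ef + f²) + e²f²`. -/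
noncomputable def Btau : Lam3 :=
  1 + (eGen + fGen) - (eGen ^ 2 + eGen * fGen + fGen ^ 2) + eGen ^ 2 * fGen ^ 2

/-! Put `x = 1 - e` and `y = 1 - f`. In characteristic 3 we have `x³ = y³ = 0` and
`1 + e + e² = x²`, while `(e + f)³ = e³ + f³ = -1` makes `e + f` a unit, so `B_σ m = m` iff
`x y m = 0`. Modulo `(x², y²)` every element is `a + b x + c y + d x y` with scalar coefficients,
`x y` kills `(x², y²)`, and `x y (a + b x + c y + d x y) = 0` forces `a = b = c = d = 0` because
`x² y² ≠ 0`. -/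

open Algebra

variable {R : Type*} [CommRing R]

section CharThree

variable [CharP R 3]

theorem one_add_add_sq_eq_one_sub_sq (e : R) : 1 + e + e ^ 2 = (1 - e) ^ 2 := by
  linear_combination e * CharP.ofNat_eq_zero R 3

theorem one_sub_pow_three_eq_zero {e : R} (he : e ^ 3 = 1) : (1 - e) ^ 3 = 0 := by
  rw [sub_pow_char, one_pow, he, sub_self]

theorem isUnit_add_of_pow_three_eq_one {e f : R} (he : e ^ 3 = 1) (hf : f ^ 3 = 1) :
    IsUnit (e + f) := by
  have hcube : (e + f) ^ 3 = -1 := by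
    rw [add_pow_char, he, hf]
    linear_combination CharP.ofNat_eq_zero R 3
  exact .of_mul_eq_one (-(e + f) ^ 2) (by linear_combination -hcube)

end CharThree

theorem mul_mul_eq_zero_of_mem_span_sq {x y m : R} (hx : x ^ 3 = 0) (hy : y ^ 3 = 0)
    (hm : m ∈ Ideal.span {x ^ 2, y ^ 2}) : x * y * m = 0 := by
  obtain ⟨p, q, rfl⟩ := Ideal.mem_span_pair.1 hm
  linear_combination (y * p) * hx + (x * q) * hy

variable {k : Type*} [Field k] [Algebra k R]

theorem exists_eq_of_mem_adjoin_pair_of_sq_eq_zero {x y : R} (hx : x ^ 2 = 0) (hy : y ^ 2 = 0)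
    {s : R} (hs : s ∈ adjoin k {x, y}) :
    ∃ a b c d : k, s = algebraMap k R a + algebraMap k R b * x + algebraMap k R c * y +
      algebraMap k R d * (x * y) := by
  induction hs using Algebra.adjoin_induction with
  | mem s hs =>
    rcases hs with rfl | rfl
    · exact ⟨0, 1, 0, 0, by simp⟩
    · exact ⟨0, 0, 1, 0, by simp⟩
  | algebraMap r => exact ⟨r, 0, 0, 0, by simp⟩
  | add s t _ _ hs ht =>
    obtain ⟨a, b, c, d, rfl⟩ := hs
    obtain ⟨a', b', c', d', rfl⟩ := ht
    exact ⟨a + a', b + b', c + c', d + d', by simp only [map_add]; ring⟩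
  | mul s t _ _ hs ht =>
    obtain ⟨a, b, c, d, rfl⟩ := hs
    obtain ⟨a', b', c', d', rfl⟩ := ht
    refine ⟨a * a', a * b' + b * a', a * c' + c * a', a * d' + b * c' + c * b' + d * a', ?_⟩
    simp only [map_add, map_mul]
    set φ := algebraMap k R
    linear_combination
      (φ b * φ b' + (φ b * φ d' + φ d * φ b') * y + φ d * φ d' * y ^ 2) * hx +
        (φ c * φ c' + (φ c * φ d' + φ d * φ c') * x) * hy

theorem eq_zero_of_mul_mul_eq_zero {x y : R} (hx : x ^ 3 = 0) (hy : y ^ 3 = 0)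
    (hxy : x ^ 2 * y ^ 2 ≠ 0) {a b c d : k}
    (h : x * y * (algebraMap k R a + algebraMap k R b * x + algebraMap k R c * y +
      algebraMap k R d * (x * y)) = 0) :
    a = 0 ∧ b = 0 ∧ c = 0 ∧ d = 0 := by
  have key (r : k) (hr : algebraMap k R r * (x ^ 2 * y ^ 2) = 0) : r = 0 := by
    rw [← Algebra.smul_def, smul_eq_zero] at hr
    exact hr.resolve_right hxy
  -- multiplying by `x y`, `y`, `x` in turn isolates `a`, `b`, `c` as multiples of `x² y²`
  set φ := algebraMap k R
  have ha : a = 0 := key a <| by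
    linear_combination x * y * h - (φ b * y ^ 2 + φ d * y ^ 3) * hx - φ c * x ^ 2 * hy
  simp only [ha, map_zero, zero_add] at h
  have hb : b = 0 := key b <| by linear_combination y * h - (φ c * x + φ d * x ^ 2) * hy
  have hc : c = 0 := key c <| by linear_combination x * h - (φ b * y + φ d * y ^ 2) * hx
  simp only [hb, hc, map_zero, zero_mul, zero_add] at h
  exact ⟨ha, hb, hc, key d <| by linear_combination h⟩

theorem mul_mul_eq_zero_iff_mem_span_sq {x y : R} (hx : x ^ 3 = 0) (hy : y ^ 3 = 0)
    (hxy : x ^ 2 * y ^ 2 ≠ 0) (hgen : adjoin k {x, y} = ⊤) (m : R) :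
    x * y * m = 0 ↔ m ∈ Ideal.span {x ^ 2, y ^ 2} := by
  refine ⟨fun hm => ?_, mul_mul_eq_zero_of_mem_span_sq hx hy⟩
  set I := Ideal.span {x ^ 2, y ^ 2}
  set π := Ideal.Quotient.mkₐ k I
  have hπ_sq {z : R} (hz : z ^ 2 ∈ I) : π z ^ 2 = 0 := by
    rw [← map_pow, Ideal.Quotient.mkₐ_eq_mk, Ideal.Quotient.eq_zero_iff_mem]
    exact hz
  have hπm : π m ∈ adjoin k {π x, π y} := by
    rw [← Set.image_pair, ← AlgHom.map_adjoin, hgen]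
    exact ⟨m, trivial, rfl⟩
  obtain ⟨a, b, c, d, hr⟩ := exists_eq_of_mem_adjoin_pair_of_sq_eq_zero
    (hπ_sq (Ideal.subset_span (by simp))) (hπ_sq (Ideal.subset_span (by simp))) hπm
  set r := algebraMap k R a + algebraMap k R b * x + algebraMap k R c * y +
    algebraMap k R d * (x * y)
  have hmr : m - r ∈ I := by
    rw [← Ideal.Quotient.eq, ← Ideal.Quotient.mkₐ_eq_mk k, hr]
    simp [r, π]
  have hr0 : x * y * r = 0 := by
    linear_combination hm - mul_mul_eq_zero_of_mem_span_sq hx hy hmr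
  obtain ⟨rfl, rfl, rfl, rfl⟩ := eq_zero_of_mul_mul_eq_zero hx hy hxy hr0
  simpa [r] using hmr

namespace Lam3

open AddMonoidAlgebra

instance : CharP Lam3 3 := charP_of_injective_algebraMap' (ZMod 3) 3

theorem single_pow_three (g : ZMod 3 × ZMod 3) : (single g 1 : Lam3) ^ 3 = 1 := by
  rw [single_pow, one_pow, show 3 • g = 0 by revert g; decide, one_def]

theorem eGen_pow_three : eGen ^ 3 = 1 := single_pow_three _

theorem fGen_pow_three : fGen ^ 3 = 1 := single_pow_three _

theorem single_eq_eGen_pow_mul_fGen_pow (i j : ZMod 3) :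
    (single (i, j) 1 : Lam3) = eGen ^ i.val * fGen ^ j.val := by
  rw [eGen, fGen, single_pow, single_pow, single_mul_single, one_pow, one_pow, mul_one]
  congr 1
  ext <;> simp

theorem adjoin_one_sub_eGen_one_sub_fGen : adjoin (ZMod 3) {1 - eGen, 1 - fGen} = ⊤ := by
  have hmem {z : Lam3} (hz : 1 - z ∈ adjoin (ZMod 3) {1 - eGen, 1 - fGen}) :
      z ∈ adjoin (ZMod 3) {1 - eGen, 1 - fGen} := by
    simpa using sub_mem (one_mem _) hz
  refine eq_top_iff.2 fun m _ =>
    m.induction_on ?_ (fun _ _ => add_mem) fun r _ hm => Subalgebra.smul_mem _ hm r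
  rintro ⟨i, j⟩
  rw [of_apply, toAdd_ofAdd, single_eq_eGen_pow_mul_fGen_pow]
  exact mul_mem (pow_mem (hmem (subset_adjoin (by simp))) _)
    (pow_mem (hmem (subset_adjoin (by simp))) _)

theorem one_sub_eGen_sq_mul_one_sub_fGen_sq_ne_zero : (1 - eGen) ^ 2 * (1 - fGen) ^ 2 ≠ 0 := by
  rw [← one_add_add_sq_eq_one_sub_sq, ← one_add_add_sq_eq_one_sub_sq]
  intro h
  -- the product is the sum of all nine group elements, so its coefficient at `0` is `1`
  have := congrArg (fun m : Lam3 => m.coeff 0) h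
  simp [eGen, fGen, single_pow, one_def, add_mul, mul_add, single_mul_single,
    show (2 : ZMod 3) ≠ 0 by decide] at this

theorem Bsig_mul_eq_self_iff (m : Lam3) :
    Bsig * m = m ↔ (1 - eGen) * (1 - fGen) * m = 0 := by
  rw [← sub_eq_zero, show Bsig * m - m = -((eGen + fGen) * ((1 - eGen) * (1 - fGen) * m)) by
    rw [Bsig]; ring, neg_eq_zero,
    (isUnit_add_of_pow_three_eq_one eGen_pow_three fGen_pow_three).mul_right_eq_zero]

end Lam3

/-- The annihilator of `1 - B_σ` in `Λ₁ = 𝔽₃[e,f]/(e³-1, f³-1)`, i.e.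
`{m : B_σ · m = m}`, equals the ideal generated by `1 + e + e²` and `1 + f + f²`. -/
theorem stmt_15 :
    ∀ m : Lam3, Bsig * m = m ↔ m ∈ Ideal.span {1 + eGen + eGen ^ 2, 1 + fGen + fGen ^ 2} := by
  intro m
  rw [Lam3.Bsig_mul_eq_self_iff, one_add_add_sq_eq_one_sub_sq, one_add_add_sq_eq_one_sub_sq]
  exact mul_mul_eq_zero_iff_mem_span_sq (one_sub_pow_three_eq_zero Lam3.eGen_pow_three)
    (one_sub_pow_three_eq_zero Lam3.fGen_pow_three)
    Lam3.one_sub_eGen_sq_mul_one_sub_fGen_sq_ne_zero Lam3.adjoin_one_sub_eGen_one_sub_fGen m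
end
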